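/- The entry/body-labeled 1-LTS L̂1(StExp^(*)(A)) generated by the marked TSS T̲̂^(*)(A) is an entry/body-labeling of the stacked star expressions 1-LTS L1(StExp^(*)(A)), and it is a LLEE-witness of L1(StExp^(*)(A)), i.e., it satisfies conditions (W1), (W2) and (W3). -/

import Mathlib

universe u v w

/-- Star expressions over a set `A` of actions. -/
inductive StExp (A : Type u) : Type u
  | zero : StExp A
  | one : StExp A
  | act : A → StExp A
  | add : StExp A → StExp A → StExp A
  | mul : StExp A → StExp A → StExp A
  | star : StExp A → StExp A

namespace StExp

variable {A : Type u}

/-- Immediate termination in Milner's TSS `T(A)`. -/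
inductive Term : StExp A → Prop
  | one : Term StExp.one
  | addL {e₁ e₂ : StExp A} : Term e₁ → Term (StExp.add e₁ e₂)
  | addR {e₁ e₂ : StExp A} : Term e₂ → Term (StExp.add e₁ e₂)
  | mul {e₁ e₂ : StExp A} : Term e₁ → Term e₂ → Term (StExp.mul e₁ e₂)
  | star {e : StExp A} : Term (StExp.star e)

/-- Transitions in Milner's TSS `T(A)`. -/
inductive Step : StExp A → A → StExp A → Prop
  | act {a : A} : Step (StExp.act a) a StExp.one
  | addL {e₁ e₂ e' : StExp A} {a : A} : Step e₁ a e' → Step (StExp.add e₁ e₂) a e'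
  | addR {e₁ e₂ e' : StExp A} {a : A} : Step e₂ a e' → Step (StExp.add e₁ e₂) a e'
  | mulL {e₁ e₂ e₁' : StExp A} {a : A} :
      Step e₁ a e₁' → Step (StExp.mul e₁ e₂) a (StExp.mul e₁' e₂)
  | mulR {e₁ e₂ e₂' : StExp A} {a : A} :
      Term e₁ → Step e₂ a e₂' → Step (StExp.mul e₁ e₂) a e₂'
  | star {e e' : StExp A} {a : A} :
      Step e a e' → Step (StExp.star e) a (StExp.mul e' (StExp.star e))

/-- (Syntactic) star height. -/
def height : StExp A → ℕ
  | .zero => 0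
  | .one => 0
  | .act _ => 0
  | .add e₁ e₂ => max e₁.height e₂.height
  | .mul e₁ e₂ => max e₁.height e₂.height
  | .star e => e.height + 1

end StExp

/-- Stacked star expressions: `E ::= e | E·e | E * e*`. -/
inductive SExp (A : Type u) : Type u
  | up : StExp A → SExp A
  | pr : SExp A → StExp A → SExp A
  | st : SExp A → StExp A → SExp A

namespace SExp

variable {A : Type u}

/-- Projection to star expressions, interpreting `*` as `·`. -/
def proj : SExp A → StExp A
  | .up e => e
  | .pr E e => StExp.mul E.proj e
  | .st E e => StExp.mul E.proj (StExp.star e)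

/-- `E` is a star expression (contains no stacked product `*`). -/
def IsStExp : SExp A → Prop
  | .up _ => True
  | .pr E _ => IsStExp E
  | .st _ _ => False

/-- Star expressions that are not products (canonical arguments of `up`). -/
def UpOk : StExp A → Prop
  | .mul _ _ => False
  | _ => True

/-- Canonical stacked star expressions: products of star expressions are
represented by `pr` rather than by `up` applied to `StExp.mul`. -/
def Canonical : SExp A → Prop
  | .up e => UpOk e
  | .pr E _ => Canonical E
  | .st E _ => Canonical E

/-- Canonical embedding of star expressions into stacked star expressions. -/
def flatUp : StExp A → SExp A
  | .mul e₁ e₂ => SExp.pr (flatUp e₁) e₂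
  | e => SExp.up e

/-- Immediate termination for stacked star expressions (TSS `T̲^(*)(A)`). -/
inductive STerm : SExp A → Prop
  | up {e : StExp A} : StExp.Term e → STerm (SExp.up e)
  | pr {E : SExp A} {e : StExp A} : STerm E → StExp.Term e → STerm (SExp.pr E e)

/-- Transitions of the TSS `T̲^(*)(A)`; labels in `Option A`, where `none`
is the empty-step label `1`. -/
inductive SStep : SExp A → Option A → SExp A → Prop
  | act {a : A} : SStep (SExp.up (StExp.act a)) (some a) (SExp.up StExp.one)
  | addL {e₁ e₂ : StExp A} {a : A} {E' : SExp A} :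
      SStep (SExp.up e₁) (some a) E' → SStep (SExp.up (StExp.add e₁ e₂)) (some a) E'
  | addR {e₁ e₂ : StExp A} {a : A} {E' : SExp A} :
      SStep (SExp.up e₂) (some a) E' → SStep (SExp.up (StExp.add e₁ e₂)) (some a) E'
  | upMulL {e₁ e₂ : StExp A} {l : Option A} {E₁' : SExp A} :
      SStep (SExp.up e₁) l E₁' → SStep (SExp.up (StExp.mul e₁ e₂)) l (SExp.pr E₁' e₂)
  | upMulR {e₁ e₂ : StExp A} {a : A} {E₂' : SExp A} :
      StExp.Term e₁ → SStep (SExp.up e₂) (some a) E₂' →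
      SStep (SExp.up (StExp.mul e₁ e₂)) (some a) E₂'
  | upStar {e : StExp A} {a : A} {E' : SExp A} :
      SStep (SExp.up e) (some a) E' →
      SStep (SExp.up (StExp.star e)) (some a) (SExp.st E' e)
  | prL {E₁ E₁' : SExp A} {e₂ : StExp A} {l : Option A} :
      SStep E₁ l E₁' → SStep (SExp.pr E₁ e₂) l (SExp.pr E₁' e₂)
  | prR {E₁ E₂' : SExp A} {e₂ : StExp A} {a : A} :
      STerm E₁ → SStep (SExp.up e₂) (some a) E₂' → SStep (SExp.pr E₁ e₂) (some a) E₂'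
  | stL {E₁ E₁' : SExp A} {e₂ : StExp A} {l : Option A} :
      SStep E₁ l E₁' → SStep (SExp.st E₁ e₂) l (SExp.st E₁' e₂)
  | stOne {E₁ : SExp A} {e₂ : StExp A} :
      STerm E₁ → SStep (SExp.st E₁ e₂) none (SExp.up (StExp.star e₂))

/-- `1`-transition. -/
def OneStep (E F : SExp A) : Prop := SStep E none F

/-- Transition with an arbitrary label in `A ∪ {1}`. -/
def AStep (E F : SExp A) : Prop := ∃ l, SStep E l F

/-- Induced (proper) transition `E ⇒a E'`: a sequence of `1`-transitions
followed by an `a`-transition. -/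
def IStep (E : SExp A) (a : A) (E' : SExp A) : Prop :=
  ∃ F, Relation.ReflTransGen OneStep E F ∧ SStep F (some a) E'

/-- Induced termination `E ↓(1)`: a sequence of `1`-transitions ending in a
terminating expression. -/
def ITerm (E : SExp A) : Prop :=
  ∃ F, Relation.ReflTransGen OneStep E F ∧ STerm F

/-- `E` is normed: a path to an expression with immediate termination. -/
def Normed (E : SExp A) : Prop :=
  ∃ F, Relation.ReflTransGen AStep E F ∧ STerm F

/-- `E` is normed⁺: a nonempty sequence of induced transitions to an
expression with induced termination. -/
def NormedP (E : SExp A) : Prop :=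
  ∃ F, Relation.TransGen (fun X Y => ∃ a : A, IStep X a Y) E F ∧ ITerm F

/-- Induced termination as derived in the extension `T̲ind^(*)(A)`. -/
inductive IndTerm : SExp A → Prop
  | base {E : SExp A} : STerm E → IndTerm E
  | step {E F : SExp A} : SStep E none F → IndTerm F → IndTerm E

/-- Induced transitions as derived in the extension `T̲ind^(*)(A)`. -/
inductive IndStep : SExp A → A → SExp A → Prop
  | base {E E' : SExp A} {a : A} : SStep E (some a) E' → IndStep E a E'
  | step {E F E' : SExp A} {a : A} : SStep E none F → IndStep F a E' → IndStep E a E'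

/-- Marked transitions of the TSS `T̲̂^(*)(A)`: marking label `0` means a body
(`bo`) transition, `n ≥ 1` a loop-entry transition of level `n`. -/
inductive MStep : SExp A → Option A × ℕ → SExp A → Prop
  | act {a : A} : MStep (SExp.up (StExp.act a)) (some a, 0) (SExp.up StExp.one)
  | addL {e₁ e₂ : StExp A} {a : A} {n : ℕ} {E' : SExp A} :
      MStep (SExp.up e₁) (some a, n) E' → MStep (SExp.up (StExp.add e₁ e₂)) (some a, 0) E'
  | addR {e₁ e₂ : StExp A} {a : A} {n : ℕ} {E' : SExp A} :
      MStep (SExp.up e₂) (some a, n) E' → MStep (SExp.up (StExp.add e₁ e₂)) (some a, 0) E'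
  | upMulL {e₁ e₂ : StExp A} {l : Option A × ℕ} {E₁' : SExp A} :
      MStep (SExp.up e₁) l E₁' → MStep (SExp.up (StExp.mul e₁ e₂)) l (SExp.pr E₁' e₂)
  | upMulR {e₁ e₂ : StExp A} {a : A} {n : ℕ} {E₂' : SExp A} :
      StExp.Term e₁ → MStep (SExp.up e₂) (some a, n) E₂' →
      MStep (SExp.up (StExp.mul e₁ e₂)) (some a, 0) E₂'
  | upStarP {e : StExp A} {a : A} {n : ℕ} {E' : SExp A} :
      NormedP (SExp.up e) → MStep (SExp.up e) (some a, n) E' →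
      MStep (SExp.up (StExp.star e)) (some a, e.height + 1) (SExp.st E' e)
  | upStarN {e : StExp A} {a : A} {n : ℕ} {E' : SExp A} :
      ¬ NormedP (SExp.up e) → MStep (SExp.up e) (some a, n) E' →
      MStep (SExp.up (StExp.star e)) (some a, 0) (SExp.st E' e)
  | prL {E₁ E₁' : SExp A} {e₂ : StExp A} {l : Option A × ℕ} :
      MStep E₁ l E₁' → MStep (SExp.pr E₁ e₂) l (SExp.pr E₁' e₂)
  | prR {E₁ E₂' : SExp A} {e₂ : StExp A} {a : A} {n : ℕ} :
      STerm E₁ → MStep (SExp.up e₂) (some a, n) E₂' →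
      MStep (SExp.pr E₁ e₂) (some a, 0) E₂'
  | stL {E₁ E₁' : SExp A} {e₂ : StExp A} {l : Option A × ℕ} :
      MStep E₁ l E₁' → MStep (SExp.st E₁ e₂) l (SExp.st E₁' e₂)
  | stOne {E₁ : SExp A} {e₂ : StExp A} :
      STerm E₁ → MStep (SExp.st E₁ e₂) (none, 0) (SExp.up (StExp.star e₂))

/-- Body transition `→bo`. -/
def BStep (E F : SExp A) : Prop := ∃ l : Option A, MStep E (l, 0) F

/-- Star height of stacked star expressions. -/
def heightS : SExp A → ℕ
  | .up e => e.height
  | .pr E e => max E.heightS e.height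
  | .st E e => max E.heightS (e.height + 1)

end SExp

/-- Applicative contexts of stacked star expressions. -/
inductive AppCtx (A : Type u) : Type u
  | hole : AppCtx A
  | pr : AppCtx A → StExp A → AppCtx A
  | st : AppCtx A → StExp A → AppCtx A

/-- Filling the hole of an applicative context. -/
def AppCtx.fill {A : Type u} : AppCtx A → SExp A → SExp A
  | .hole, E => E
  | .pr C e, E => SExp.pr (C.fill E) e
  | .st C e, E => SExp.st (C.fill E) e

/-- A labeled transition system with termination. -/
structure LTS (S : Type u) (L : Type v) where
  step : S → L → S → Prop
  term : S → Prop

/-- Bisimulation between two LTSs with termination. -/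
def IsBisimulation {S₁ : Type u} {S₂ : Type v} {L : Type w}
    (M₁ : LTS S₁ L) (M₂ : LTS S₂ L) (B : S₁ → S₂ → Prop) : Prop :=
  (∃ s₁ s₂, B s₁ s₂) ∧
  ∀ s₁ s₂, B s₁ s₂ →
    ((∀ a s₁', M₁.step s₁ a s₁' → ∃ s₂', M₂.step s₂ a s₂' ∧ B s₁' s₂') ∧
     (∀ a s₂', M₂.step s₂ a s₂' → ∃ s₁', M₁.step s₁ a s₁' ∧ B s₁' s₂') ∧
     (M₁.term s₁ ↔ M₂.term s₂))

/-- The star expressions LTS `L(StExp(A))`. -/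
def stexpLTS (A : Type u) : LTS (StExp A) A := ⟨StExp.Step, StExp.Term⟩

/-- The induced LTS of the stacked star expressions 1-LTS `L1(StExp^(*)(A))`. -/
def indSExpLTS (A : Type u) : LTS (SExp A) A := ⟨SExp.IStep, SExp.ITerm⟩

/-- A (rooted) chart. -/
structure Chart (V : Type u) (L : Type v) where
  verts : Set V
  start : V
  step : V → L → V → Prop
  term : V → Prop

/-- Bisimulation between two charts: a bisimulation between the underlying
LTSs that relates the start vertices. -/
def IsChartBisim {V₁ : Type u} {V₂ : Type v} {L : Type w}
    (C₁ : Chart V₁ L) (C₂ : Chart V₂ L) (B : V₁ → V₂ → Prop) : Prop :=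
  (∀ x y, B x y → x ∈ C₁.verts ∧ y ∈ C₂.verts) ∧
  B C₁.start C₂.start ∧
  ∀ x y, B x y →
    ((∀ a x', C₁.step x a x' → ∃ y', C₂.step y a y' ∧ B x' y') ∧
     (∀ a y', C₂.step y a y' → ∃ x', C₁.step x a x' ∧ B x' y') ∧
     (C₁.term x ↔ C₂.term y))

def ChartBisimilar {V₁ : Type u} {V₂ : Type v} {L : Type w}
    (C₁ : Chart V₁ L) (C₂ : Chart V₂ L) : Prop :=
  ∃ B, IsChartBisim C₁ C₂ B

/-- Star expressions reachable from `e` in Milner's LTS. -/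
def MReach {A : Type u} (e : StExp A) : Set (StExp A) :=
  {f | Relation.ReflTransGen (fun x y => ∃ a, StExp.Step x a y) e f}

/-- The chart interpretation `C(e)` of a star expression. -/
def chartInt {A : Type u} (e : StExp A) : Chart (StExp A) A where
  verts := MReach e
  start := e
  step x a y := x ∈ MReach e ∧ StExp.Step x a y
  term x := x ∈ MReach e ∧ StExp.Term x

/-- Stacked star expressions reachable from (the canonical representation of)
`e` in the 1-LTS. -/
def SReach {A : Type u} (e : StExp A) : Set (SExp A) :=
  {F | Relation.ReflTransGen SExp.AStep (SExp.flatUp e) F}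

/-- The 1-chart interpretation `C1(e)` of a star expression. -/
def oneChartInt {A : Type u} (e : StExp A) : Chart (SExp A) (Option A) where
  verts := SReach e
  start := SExp.flatUp e
  step x l y := x ∈ SReach e ∧ SExp.SStep x l y
  term x := x ∈ SReach e ∧ SExp.STerm x

/-- The entry/body-labeled 1-chart interpretation `Ĉ1(e)`. -/
def markedOneChartInt {A : Type u} (e : StExp A) : Chart (SExp A) (Option A × ℕ) where
  verts := SReach e
  start := SExp.flatUp e
  step x l y := x ∈ SReach e ∧ SExp.MStep x l y
  term x := x ∈ SReach e ∧ SExp.STerm x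

/-- The induced chart of a 1-chart: induced transitions and induced
termination. -/
def indChart {V : Type u} {A : Type v} (C : Chart V (Option A)) : Chart V A where
  verts := C.verts
  start := C.start
  step x a y := ∃ u, Relation.ReflTransGen (fun s t => C.step s none t) x u ∧ C.step u (some a) y
  term x := ∃ u, Relation.ReflTransGen (fun s t => C.step s none t) x u ∧ C.term u

/-- An infinite path from the start vertex of a chart. -/
def IsInfPathFrom {V : Type u} {L : Type v} (C : Chart V L) (p : ℕ → V) : Prop :=
  p 0 = C.start ∧ ∀ i, ∃ l, C.step (p i) l (p (i + 1))

/-- Loop chart: (L1) an infinite path from the start vertex exists, (L2) every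
infinite path from the start vertex returns to it after a positive number of
transitions, (L3) only the start vertex may terminate. -/
def IsLoopChart {V : Type u} {L : Type v} (C : Chart V L) : Prop :=
  (∃ p, IsInfPathFrom C p) ∧
  (∀ p, IsInfPathFrom C p → ∃ k, 0 < k ∧ p k = C.start) ∧
  (∀ w ∈ C.verts, C.term w → w = C.start)

namespace LLEE

variable {S : Type u} {L : Type v}

/-- Body transition of an entry/body-labeling. -/
def Body (step : S → L × ℕ → S → Prop) (x y : S) : Prop := ∃ l, step x (l, 0) y

/-- Entry transition of level `n` of an entry/body-labeling. -/
def Entry (step : S → L × ℕ → S → Prop) (n : ℕ) (x y : S) : Prop := ∃ l, step x (l, n) y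

/-- Vertices of the induced subchart at `(v, n)`: on paths that start with an
`→[n]` transition from `v`, continue with body transitions, and halt upon
revisiting `v`. -/
def loopVerts (step : S → L × ℕ → S → Prop) (v : S) (n : ℕ) : Set S :=
  insert v {w | ∃ u, Entry step n v u ∧
    Relation.ReflTransGen (fun x y => Body step x y ∧ x ≠ v) u w}

/-- The induced subchart at `(v, n)`. -/
def subchartAt (step : S → L × ℕ → S → Prop) (term : S → Prop) (v : S) (n : ℕ) :
    Chart S (L × ℕ) where
  verts := loopVerts step v n
  start := v
  step x l y :=
    (x = v ∧ l.2 = n ∧ step x l y) ∨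
    (x ∈ loopVerts step v n ∧ x ≠ v ∧ l.2 = 0 ∧ step x l y)
  term x := x ∈ loopVerts step v n ∧ term x

/-- LLEE-witness conditions (W1)–(W3) for an entry/body-labeled transition
system with transitions `step` and termination `term`. -/
def IsWitness (step : S → L × ℕ → S → Prop) (term : S → Prop) : Prop :=
  (¬ ∃ p : ℕ → S, ∀ i, Body step (p i) (p (i + 1))) ∧
  (∀ v n, 0 < n → (∃ w, Entry step n v w) → IsLoopChart (subchartAt step term v n)) ∧
  (∀ v n, 0 < n → (∃ w, Entry step n v w) →
    ∀ t, t ∈ loopVerts step v n → t ≠ v → ∀ m t', 0 < m → Entry step m t t' → m < n)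

end LLEE

namespace LEE

variable {V : Type u} {L : Type v}

/-- Vertices of the subchart generated from `v` by a set `U` of transitions
from `v`: paths start with a transition in `U` and continue (with arbitrary
transitions) until `v` is reached again. -/
def genVerts (C : Chart V L) (v : V) (U : Set (V × L × V)) : Set V :=
  insert v {w | ∃ u, (∃ l, (v, l, u) ∈ U) ∧
    Relation.ReflTransGen (fun x y => (∃ l, C.step x l y) ∧ x ≠ v) u w}

/-- The subchart generated from `v` by the transitions in `U`. -/
def genSubchart (C : Chart V L) (v : V) (U : Set (V × L × V)) : Chart V L where
  verts := genVerts C v U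
  start := v
  step x l y :=
    (x = v ∧ (v, l, y) ∈ U) ∨
    (x ∈ genVerts C v U ∧ x ≠ v ∧ C.step x l y)
  term x := x ∈ genVerts C v U ∧ C.term x

/-- `U` determines a loop subchart of `C` rooted at `v`. -/
def IsLoopSubchart (C : Chart V L) (v : V) (U : Set (V × L × V)) : Prop :=
  v ∈ C.verts ∧ U.Nonempty ∧
  (∀ t ∈ U, t.1 = v ∧ C.step t.1 t.2.1 t.2.2) ∧
  IsLoopChart (genSubchart C v U)

/-- Elimination of the loop-entry transitions in `U`, followed by removal of
all vertices and transitions that become unreachable. -/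
def elim (C : Chart V L) (U : Set (V × L × V)) : Chart V L :=
  let step' : V → L → V → Prop := fun x l y => C.step x l y ∧ (x, l, y) ∉ U
  let R : Set V := {w | Relation.ReflTransGen (fun x y => ∃ l, step' x l y) C.start w}
  { verts := C.verts ∩ R
    start := C.start
    step := fun x l y => step' x l y ∧ x ∈ R ∧ y ∈ R
    term := fun x => C.term x ∧ x ∈ R }

/-- One step of the loop elimination procedure. -/
def ElimStep (C C' : Chart V L) : Prop :=
  ∃ v U, IsLoopSubchart C v U ∧ C' = elim C U

/-- The chart has an infinite path. -/
def HasInfPath (C : Chart V L) : Prop :=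
  ∃ p : ℕ → V, p 0 ∈ C.verts ∧ ∀ i, ∃ l, C.step (p i) l (p (i + 1))

/-- The loop existence and elimination property LEE: repeated elimination of
loop subcharts results in a chart without an infinite path. -/
def SatisfiesLEE (C : Chart V L) : Prop :=
  ∃ C', Relation.ReflTransGen ElimStep C C' ∧ ¬ HasInfPath C'

end LEE

/-- A maximal path of body transitions from `X` in the entry/body-labeled
1-LTS: finite (of length `len`) or infinite (`len = ⊤`), and if finite then
not extensible by any further body transition. -/
structure BoPath (A : Type u) (X : SExp A) where
  len : ℕ∞
  f : ℕ → SExp A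
  head : f 0 = X
  steps : ∀ i : ℕ, (i : ℕ∞) < len → SExp.BStep (f i) (f (i + 1))
  maximal : ∀ n : ℕ, len = (n : ℕ∞) → ∀ Y, ¬ SExp.BStep (f n) Y

/-- Canonical stacked star expressions (the states of the stacked star
expressions 1-LTS `L1(StExp^(*)(A))`). -/
def CSExp (A : Type u) : Type u := {E : SExp A // SExp.Canonical E}

/-! A loop-entry transition of level `n > 0` leads from a canonical `C[g*]` to `C[E' * g*]`,
where `n = h(g*)` and `g` is normed⁺. The body transitions that follow act only on the left
factor `F` of the stacked product, which keeps `h(F) ≤ h(g)` (so entries from there have level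
`< n`) and prevents termination, until the product is discharged back to `C[g*]`. Body
transitions are well founded, which forces every infinite path of the induced subchart back to
its start, and the normedness of `g` supplies such a path. -/

open Relation

namespace SExp

variable {A : Type u}

theorem MStep.sStep {E E' : SExp A} {l : Option A × ℕ} (h : MStep E l E') : SStep E l.1 E' := by
  induction h with
  | act => exact .act
  | addL _ ih => exact .addL ih
  | addR _ ih => exact .addR ih
  | upMulL _ ih => exact .upMulL ih
  | upMulR h₁ _ ih => exact .upMulR h₁ ih
  | upStarP _ _ ih => exact .upStar ih
  | upStarN _ _ ih => exact .upStar ih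
  | prL _ ih => exact .prL ih
  | prR h₁ _ ih => exact .prR h₁ ih
  | stL _ ih => exact .stL ih
  | stOne h₁ => exact .stOne h₁

theorem SStep.exists_mStep {E E' : SExp A} {l : Option A} (h : SStep E l E') :
    ∃ n, MStep E (l, n) E' := by
  induction h with
  | act => exact ⟨0, .act⟩
  | addL _ ih => obtain ⟨_, h⟩ := ih; exact ⟨0, .addL h⟩
  | addR _ ih => obtain ⟨_, h⟩ := ih; exact ⟨0, .addR h⟩
  | upMulL _ ih => obtain ⟨n, h⟩ := ih; exact ⟨n, .upMulL h⟩
  | upMulR h₁ _ ih => obtain ⟨_, h⟩ := ih; exact ⟨0, .upMulR h₁ h⟩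
  | @upStar e _ _ _ ih =>
      obtain ⟨_, h⟩ := ih
      by_cases hN : NormedP (up e)
      · exact ⟨e.height + 1, .upStarP hN h⟩
      · exact ⟨0, .upStarN hN h⟩
  | prL _ ih => obtain ⟨n, h⟩ := ih; exact ⟨n, .prL h⟩
  | prR h₁ _ ih => obtain ⟨_, h⟩ := ih; exact ⟨0, .prR h₁ h⟩
  | stL _ ih => obtain ⟨n, h⟩ := ih; exact ⟨n, .stL h⟩
  | stOne h₁ => exact ⟨0, .stOne h₁⟩

theorem sStep_iff_exists_mStep {E E' : SExp A} {l : Option A} :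
    SStep E l E' ↔ ∃ n, MStep E (l, n) E' :=
  ⟨SStep.exists_mStep, fun ⟨_, h⟩ => h.sStep⟩

theorem MStep.heightS_le {E E' : SExp A} {l : Option A × ℕ} (h : MStep E l E') :
    E'.heightS ≤ E.heightS := by
  induction h <;> simp only [heightS, StExp.height] at * <;> omega

theorem MStep.level_le_heightS {E E' : SExp A} {l : Option A × ℕ} (h : MStep E l E') :
    l.2 ≤ E.heightS := by
  induction h <;> simp only [heightS, StExp.height] at * <;> omega

theorem MStep.canonical_of_up {e : StExp A} {l : Option A × ℕ} {E' : SExp A}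
    (h : MStep (up e) l E') : Canonical E' := by
  generalize hE : up e = E at h
  induction h generalizing e with
  | act => trivial
  | addL _ ih | addR _ ih | upMulL _ ih | upMulR _ _ ih | upStarP _ _ ih | upStarN _ _ ih =>
      exact ih rfl
  | prL | prR | stL | stOne => cases hE

theorem Canonical.mStep {E E' : SExp A} {l : Option A × ℕ} (hc : Canonical E)
    (h : MStep E l E') : Canonical E' := by
  induction h with
  | act | stOne _ => trivial
  | addL h₁ _ | addR h₁ _ | upMulL h₁ _ | upMulR _ h₁ _ | upStarP _ h₁ _ | upStarN _ h₁ _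
    | prR _ h₁ _ => exact h₁.canonical_of_up
  | prL _ ih | stL _ ih => exact ih hc

end SExp

namespace AppCtx

open SExp

variable {A : Type u}

theorem canonical_fill_iff (C : AppCtx A) (X : SExp A) : Canonical (C.fill X) ↔ Canonical X := by
  induction C with
  | hole => rfl
  | pr _ _ ih | st _ _ ih => exact ih

theorem not_sTerm_fill_st (C : AppCtx A) (F : SExp A) (g : StExp A) :
    ¬ STerm (C.fill (SExp.st F g)) := by
  induction C with
  | hole => rintro ⟨⟩
  | pr _ _ ih => rintro (_ | ⟨h, _⟩); exact ih h
  | st => rintro ⟨⟩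

theorem fill_st_ne_fill_up (C : AppCtx A) (F : SExp A) (g e : StExp A) :
    C.fill (SExp.st F g) ≠ C.fill (up e) := by
  induction C with
  | hole => rintro ⟨⟩
  | pr _ _ ih | st _ _ ih => intro h; injection h with h; exact ih h

theorem fill_up_inj {C₁ C₂ : AppCtx A} {e₁ e₂ : StExp A}
    (h : C₁.fill (up e₁) = C₂.fill (up e₂)) : C₁ = C₂ ∧ e₁ = e₂ := by
  induction C₁ generalizing C₂ with
  | hole => cases C₂ <;> cases h; exact ⟨rfl, rfl⟩
  | pr _ _ ih | st _ _ ih =>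
      cases C₂ <;> simp only [fill, reduceCtorEq, SExp.pr.injEq, SExp.st.injEq] at h
      obtain ⟨rfl, rfl⟩ := ih h.1
      exact ⟨h.2 ▸ rfl, rfl⟩

theorem mStep_fill (C : AppCtx A) {X Y : SExp A} {l : Option A × ℕ} (h : MStep X l Y) :
    MStep (C.fill X) l (C.fill Y) := by
  induction C with
  | hole => exact h
  | pr _ _ ih => exact .prL ih
  | st _ _ ih => exact .stL ih

theorem mStep_fill_st_cases (C : AppCtx A) {F Y : SExp A} {g : StExp A} {l : Option A × ℕ}
    (h : MStep (C.fill (SExp.st F g)) l Y) :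
    (∃ F', MStep F l F' ∧ Y = C.fill (SExp.st F' g)) ∨
      (l = (none, 0) ∧ STerm F ∧ Y = C.fill (up (StExp.star g))) := by
  induction C generalizing l Y with
  | hole =>
      cases h with
      | stL h => exact .inl ⟨_, h, rfl⟩
      | stOne h => exact .inr ⟨rfl, h, rfl⟩
  | pr C _ ih =>
      cases h with
      | prL h =>
          rcases ih h with ⟨F', hF', rfl⟩ | ⟨rfl, hF, rfl⟩
          · exact .inl ⟨F', hF', rfl⟩
          · exact .inr ⟨rfl, hF, rfl⟩
      | prR h _ => exact absurd h (not_sTerm_fill_st C F g)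
  | st C _ ih =>
      cases h with
      | stL h =>
          rcases ih h with ⟨F', hF', rfl⟩ | ⟨rfl, hF, rfl⟩
          · exact .inl ⟨F', hF', rfl⟩
          · exact .inr ⟨rfl, hF, rfl⟩
      | stOne h => exact absurd h (not_sTerm_fill_st C F g)

end AppCtx

namespace SExp

variable {A : Type u}

theorem MStep.exists_fill_of_entry {X W : SExp A} {l : Option A × ℕ} (h : MStep X l W)
    (hl : 0 < l.2) (hc : Canonical X) :
    ∃ (C : AppCtx A) (g : StExp A) (E' : SExp A), X = C.fill (up (StExp.star g)) ∧
      W = C.fill (st E' g) ∧ l.2 = g.height + 1 ∧ NormedP (up g) ∧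
      ∃ m, MStep (up g) (l.1, m) E' := by
  induction h with
  | act | addL | addR | upMulR | upStarN | prR | stOne => simp at hl
  | upMulL => exact hc.elim
  | @upStarP e _ m E' hN h => exact ⟨.hole, e, E', rfl, rfl, rfl, hN, m, h⟩
  | @prL _ _ e₂ _ _ ih =>
      obtain ⟨C, g, E', rfl, rfl, hg⟩ := ih hl hc
      exact ⟨.pr C e₂, g, E', rfl, rfl, hg⟩
  | @stL _ _ e₂ _ _ ih =>
      obtain ⟨C, g, E', rfl, rfl, hg⟩ := ih hl hc
      exact ⟨.st C e₂, g, E', rfl, rfl, hg⟩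

theorem not_sStep_up_none (e : StExp A) (E' : SExp A) : ¬ SStep (up e) none E' := by
  intro h
  generalize hE : up e = E at h
  generalize hl : (none : Option A) = l at h
  induction h generalizing e with
  | upMulL _ ih => exact ih _ rfl hl
  | act | addL | addR | upMulR | upStar => cases hl
  | prL | prR | stL | stOne => cases hE

theorem Normed.of_sStep {X Y : SExp A} {l : Option A} (h : SStep X l Y) (hY : Normed Y) :
    Normed X :=
  let ⟨F, hYF, hF⟩ := hY
  ⟨F, .head ⟨l, h⟩ hYF, hF⟩

theorem ITerm.normed {X : SExp A} (h : ITerm X) : Normed X :=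
  let ⟨F, hXF, hF⟩ := h
  ⟨F, ReflTransGen.mono (fun _ _ h => ⟨none, h⟩) _ _ hXF, hF⟩

theorem IStep.reflTransGen_aStep {X Y : SExp A} {a : A} (h : IStep X a Y) :
    ReflTransGen AStep X Y :=
  let ⟨_, hXF, hF⟩ := h
  (ReflTransGen.mono (fun _ _ h => ⟨none, h⟩) _ _ hXF).tail ⟨some a, hF⟩

theorem Normed.iTerm_or_normedP {X : SExp A} (h : Normed X) : ITerm X ∨ NormedP X := by
  obtain ⟨F, hXF, hF⟩ := h
  induction hXF using ReflTransGen.head_induction_on with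
  | refl => exact .inl ⟨F, .refl, hF⟩
  | head hXY _ ih =>
      obtain ⟨(_ | a), hXY⟩ := hXY
      · rcases ih with ⟨G, hYG, hG⟩ | ⟨G, hYG, hG⟩
        · exact .inl ⟨G, .head hXY hYG, hG⟩
        · obtain ⟨Z, ⟨a, Z', hYZ', hZ'⟩, hZG⟩ := TransGen.head'_iff.mp hYG
          exact .inr ⟨G, TransGen.head'_iff.mpr ⟨Z, ⟨a, Z', .head hXY hYZ', hZ'⟩, hZG⟩, hG⟩
      · rcases ih with hY | ⟨G, hYG, hG⟩
        · exact .inr ⟨_, .single ⟨a, _, .refl, hXY⟩, hY⟩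
        · exact .inr ⟨G, .head ⟨a, _, .refl, hXY⟩ hYG, hG⟩

theorem normedP_up_iff {e : StExp A} :
    NormedP (up e) ↔ ∃ a E', SStep (up e) (some a) E' ∧ Normed E' := by
  constructor
  · rintro ⟨G, hG, hGterm⟩
    obtain ⟨E', ⟨a, F, hF, hFE'⟩, hE'G⟩ := TransGen.head'_iff.mp hG
    obtain rfl : up e = F := by
      rcases hF.cases_head with h | ⟨_, h, _⟩
      · exact h
      · exact (not_sStep_up_none e _ h).elim
    have hE'G : ReflTransGen AStep E' G :=
      reflTransGen_closed (fun _ _ ⟨_, h⟩ => h.reflTransGen_aStep) _ _ hE'G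
    obtain ⟨H, hGH, hH⟩ := hGterm.normed
    exact ⟨a, E', hFE', H, hE'G.trans hGH, hH⟩
  · rintro ⟨a, E', hE', hN⟩
    rcases hN.iTerm_or_normedP with h | ⟨G, hE'G, hG⟩
    · exact ⟨E', .single ⟨a, _, .refl, hE'⟩, h⟩
    · exact ⟨G, .head ⟨a, _, .refl, hE'⟩ hE'G, hG⟩

theorem acc_pr {E₁ : SExp A} {e₂ : StExp A} (h₁ : Acc (flip BStep) E₁)
    (h₂ : ∀ l E', MStep (up e₂) l E' → Acc (flip BStep) E') : Acc (flip BStep) (pr E₁ e₂) := by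
  induction h₁ with
  | intro _ _ ih =>
      refine ⟨_, fun _ ⟨_, h⟩ => ?_⟩
      cases h with
      | prL h => exact ih _ ⟨_, h⟩
      | prR _ h => exact h₂ _ _ h

/-- A stacked product whose left factor is not normed can never be discharged. -/
theorem acc_st_of_not_normed {E₁ : SExp A} {e₂ : StExp A} (h₁ : Acc (flip BStep) E₁)
    (hN : ¬ Normed E₁) : Acc (flip BStep) (st E₁ e₂) := by
  induction h₁ with
  | intro E _ ih =>
      refine ⟨_, fun _ ⟨_, h⟩ => ?_⟩
      cases h with
      | stL h => exact ih _ ⟨_, h⟩ fun hN' => hN (hN'.of_sStep h.sStep)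
      | stOne h => exact (hN ⟨E, .refl, h⟩).elim

theorem acc_st {E₁ : SExp A} {e₂ : StExp A} (h₁ : Acc (flip BStep) E₁)
    (h₂ : Acc (flip BStep) (up (StExp.star e₂))) : Acc (flip BStep) (st E₁ e₂) := by
  induction h₁ with
  | intro _ _ ih =>
      refine ⟨_, fun _ ⟨_, h⟩ => ?_⟩
      cases h with
      | stL h => exact ih _ ⟨_, h⟩
      | stOne => exact h₂

/-- A body step out of `e*` enters `E' * e*` only when `e` is not normed⁺, so `E'` is not
normed. -/
theorem acc_up_star {e : StExp A} (h : ∀ l E', MStep (up e) l E' → Acc (flip BStep) E') :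
    Acc (flip BStep) (up (StExp.star e)) := by
  refine ⟨_, fun _ ⟨_, h'⟩ => ?_⟩
  cases h' with
  | upStarN hP h' =>
      exact acc_st_of_not_normed (h _ _ h') fun hN => hP (normedP_up_iff.mpr ⟨_, _, h'.sStep, hN⟩)

theorem acc_of_mStep_up (e : StExp A) :
    ∀ l E', MStep (up e) l E' → Acc (flip BStep) E' := by
  induction e with
  | zero | one => rintro _ _ ⟨⟩
  | act => rintro _ _ ⟨⟩; exact ⟨_, fun _ ⟨_, h⟩ => nomatch h⟩
  | add _ _ ih₁ ih₂ =>
      intro _ _ h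
      cases h with
      | addL h => exact ih₁ _ _ h
      | addR h => exact ih₂ _ _ h
  | mul _ _ ih₁ ih₂ =>
      intro _ _ h
      cases h with
      | upMulL h => exact acc_pr (ih₁ _ _ h) ih₂
      | upMulR _ h => exact ih₂ _ _ h
  | star _ ih =>
      intro _ _ h
      cases h with
      | upStarP _ h | upStarN _ h => exact acc_st (ih _ _ h) (acc_up_star ih)

theorem wellFounded_flip_bStep : WellFounded (flip (BStep (A := A))) := by
  refine ⟨fun E => ?_⟩
  induction E with
  | up e => exact ⟨_, fun _ ⟨_, h⟩ => acc_of_mStep_up e _ _ h⟩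
  | pr _ e₂ ih => exact acc_pr ih (acc_of_mStep_up e₂)
  | st _ e₂ ih => exact acc_st ih (acc_up_star (acc_of_mStep_up e₂))

theorem not_exists_bStep_seq : ¬ ∃ p : ℕ → SExp A, ∀ i, BStep (p i) (p (i + 1)) :=
  fun ⟨p, hp⟩ => (wellFounded_iff_isEmpty_descending_chain.mp wellFounded_flip_bStep).false ⟨p, hp⟩

def BodyNormed (E : SExp A) : Prop := ∃ Y, ReflTransGen BStep E Y ∧ STerm Y

theorem BodyNormed.head {X Y : SExp A} (h : BStep X Y) (hY : BodyNormed Y) : BodyNormed X :=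
  let ⟨Z, hYZ, hZ⟩ := hY
  ⟨Z, .head h hYZ, hZ⟩

/-- A body path to termination from `C[F * g*]` has to discharge the stacked product, and then
passes through `C[g*]`. -/
theorem bodyNormed_fill_up_star (C : AppCtx A) {F : SExp A} {g : StExp A}
    (h : BodyNormed (C.fill (st F g))) : BodyNormed (C.fill (up (StExp.star g))) := by
  obtain ⟨Y, hY, hYterm⟩ := h
  generalize hX : C.fill (st F g) = X at hY
  induction hY using ReflTransGen.head_induction_on generalizing F with
  | refl => exact (C.not_sTerm_fill_st F g (hX ▸ hYterm)).elim
  | head hXZ hZY ih =>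
      obtain ⟨_, h⟩ := hXZ
      subst hX
      rcases C.mStep_fill_st_cases h with ⟨F', -, rfl⟩ | ⟨-, -, rfl⟩
      · exact ih rfl
      · exact ⟨Y, hZY, hYterm⟩

/-- Along a path to termination, every loop that is entered can be cut out, since the loop is
left again through its start. -/
theorem Canonical.bodyNormed {X : SExp A} (hc : Canonical X) (hN : Normed X) : BodyNormed X := by
  obtain ⟨F, hXF, hF⟩ := hN
  induction hXF using ReflTransGen.head_induction_on with
  | refl => exact ⟨F, .refl, hF⟩
  | head hXY _ ih =>
      obtain ⟨l, hXY⟩ := hXY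
      obtain ⟨n, hXY⟩ := hXY.exists_mStep
      have hY := ih (hc.mStep hXY)
      rcases Nat.eq_zero_or_pos n with rfl | hn
      · exact hY.head ⟨l, hXY⟩
      · obtain ⟨C, g, E', rfl, rfl, -⟩ := hXY.exists_fill_of_entry hn hc
        exact bodyNormed_fill_up_star C hY

end SExp

theorem exists_seq_of_forall_exists_mem {α : Type*} {r : α → α → Prop} {s : Set α} {a : α}
    (ha : a ∈ s) (h : ∀ x ∈ s, ∃ y ∈ s, r x y) :
    ∃ p : ℕ → α, p 0 = a ∧ ∀ i, r (p i) (p (i + 1)) := by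
  choose f hfs hfr using h
  let F : s → s := fun x => ⟨f x x.2, hfs x x.2⟩
  refine ⟨fun i => (F^[i] ⟨a, ha⟩).1, rfl, fun i => ?_⟩
  simp only [Function.iterate_succ_apply']
  exact hfr _ _

namespace LLEE

variable {S : Type u} {L : Type v} {step : S → L × ℕ → S → Prop} {v : S} {n : ℕ}

theorem mem_loopVerts_of_entry {u : S} (h : Entry step n v u) : u ∈ loopVerts step v n :=
  .inr ⟨u, h, .refl⟩

theorem mem_loopVerts_of_body {x y : S} (hx : x ∈ loopVerts step v n) (hxv : x ≠ v)
    (h : Body step x y) : y ∈ loopVerts step v n := by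
  obtain rfl | ⟨u, hu, hux⟩ := hx
  · exact (hxv rfl).elim
  · exact .inr ⟨u, hu, hux.tail ⟨h, hxv⟩⟩

/-- Once a path in the induced subchart avoids `v`, it consists of body steps only. -/
theorem exists_return_of_isInfPathFrom (term : S → Prop)
    (hbody : ¬ ∃ p : ℕ → S, ∀ i, Body step (p i) (p (i + 1))) {p : ℕ → S}
    (hp : IsInfPathFrom (subchartAt step term v n) p) : ∃ k, 0 < k ∧ p k = v := by
  by_contra! hne
  refine hbody ⟨fun i => p (i + 1), fun i => ?_⟩
  obtain ⟨⟨l, _⟩, ⟨hv, -⟩ | ⟨-, -, rfl, h⟩⟩ := hp.2 (i + 1)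
  · exact (hne (i + 1) i.succ_pos hv).elim
  · exact ⟨l, h⟩

end LLEE

namespace CSExp

open SExp LLEE

variable {A : Type u}

abbrev MStep (x : CSExp A) (l : Option A × ℕ) (y : CSExp A) : Prop := SExp.MStep x.1 l y.1

abbrev STerm (x : CSExp A) : Prop := SExp.STerm x.1

theorem not_exists_body_seq : ¬ ∃ p : ℕ → CSExp A, ∀ i, Body MStep (p i) (p (i + 1)) :=
  fun ⟨p, hp⟩ => not_exists_bStep_seq ⟨fun i => (p i).1, hp⟩

variable {v : CSExp A} {n : ℕ}

theorem exists_fill_of_entry (hn : 0 < n) (h : ∃ w, Entry MStep n v w) :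
    ∃ (C : AppCtx A) (g : StExp A),
      v.1 = C.fill (up (StExp.star g)) ∧ n = g.height + 1 ∧ NormedP (up g) :=
  let ⟨_, _, hvw⟩ := h
  let ⟨C, g, _, hv, _, hng, hN, _⟩ := hvw.exists_fill_of_entry hn v.2
  ⟨C, g, hv, hng, hN⟩

variable {C : AppCtx A} {g : StExp A}

theorem eq_or_exists_fill_st_of_mem_loopVerts (hv : v.1 = C.fill (up (StExp.star g)))
    (hn : 0 < n) {w : CSExp A} (hw : w ∈ loopVerts MStep v n) :
    w = v ∨ ∃ F, w.1 = C.fill (st F g) ∧ F.heightS ≤ g.height := by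
  obtain rfl | ⟨u, ⟨_, hu⟩, huw⟩ := hw
  · exact .inl rfl
  obtain ⟨C', g', E', hv', hu, -, -, _, hE'⟩ := hu.exists_fill_of_entry hn v.2
  obtain ⟨rfl, hg⟩ := AppCtx.fill_up_inj (hv.symm.trans hv')
  cases hg
  induction huw with
  | refl => exact .inr ⟨E', hu, hE'.heightS_le⟩
  | tail _ hxy ih =>
      obtain ⟨⟨_, hxy⟩, hxv⟩ := hxy
      rcases ih with rfl | ⟨F, hF, hFg⟩
      · exact (hxv rfl).elim
      rw [MStep, hF] at hxy
      rcases C.mStep_fill_st_cases hxy with ⟨F', hFF', hy⟩ | ⟨-, -, hy⟩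
      · exact .inr ⟨F', hy, hFF'.heightS_le.trans hFg⟩
      · exact .inl (Subtype.ext (hy.trans hv.symm))

/-- Normedness of `g` yields an entry into a body-normed `E' * g*`; a body-normed left factor
can always be advanced by a body step, or discharged back to the start. -/
theorem exists_isInfPathFrom_subchartAt (hv : v.1 = C.fill (up (StExp.star g)))
    (hN : NormedP (up g)) :
    ∃ p, IsInfPathFrom (subchartAt MStep STerm v (g.height + 1)) p := by
  let s : Set (CSExp A) := {x | x = v ∨ x ∈ loopVerts MStep v (g.height + 1) ∧
    ∃ F, x.1 = C.fill (st F g) ∧ BodyNormed F}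
  refine exists_seq_of_forall_exists_mem (s := s)
    (r := fun x y => ∃ l, (subchartAt MStep STerm v (g.height + 1)).step x l y) (.inl rfl) ?_
  rintro x (rfl | ⟨hx, F, hxF, Y, hFY, hY⟩)
  · obtain ⟨a, E', hE', hNE'⟩ := normedP_up_iff.mp hN
    obtain ⟨m, hE'⟩ := hE'.exists_mStep
    have hc : Canonical (C.fill (st E' g)) := (C.canonical_fill_iff _).mpr hE'.canonical_of_up
    have hentry : SExp.MStep x.1 (some a, g.height + 1) (C.fill (st E' g)) :=
      hv ▸ C.mStep_fill (.upStarP hN hE')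
    exact ⟨⟨_, hc⟩, .inr ⟨mem_loopVerts_of_entry ⟨_, hentry⟩, E', rfl,
      hE'.canonical_of_up.bodyNormed hNE'⟩, _, .inl ⟨rfl, rfl, hentry⟩⟩
  · have hxv : x ≠ v := fun h => C.fill_st_ne_fill_up F g _ (hxF.symm.trans (h ▸ hv))
    rcases hFY.cases_head with rfl | ⟨F', ⟨l, hFF'⟩, hF'Y⟩
    · have hexit : SExp.MStep x.1 (none, 0) v.1 := hxF ▸ hv ▸ C.mStep_fill (.stOne hY)
      exact ⟨v, .inl rfl, _, .inr ⟨hx, hxv, rfl, hexit⟩⟩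
    · have hstep : SExp.MStep x.1 (l, 0) (C.fill (st F' g)) := hxF ▸ C.mStep_fill (.stL hFF')
      exact ⟨⟨_, x.2.mStep hstep⟩, .inr ⟨mem_loopVerts_of_body hx hxv ⟨l, hstep⟩, F', rfl,
        Y, hF'Y, hY⟩, _, .inr ⟨hx, hxv, rfl, hstep⟩⟩

theorem isLoopChart_subchartAt (hn : 0 < n) (h : ∃ w, Entry MStep n v w) :
    IsLoopChart (subchartAt MStep STerm v n) := by
  obtain ⟨C, g, hv, rfl, hN⟩ := exists_fill_of_entry hn h
  refine ⟨exists_isInfPathFrom_subchartAt hv hN,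
    fun _ hp => exists_return_of_isInfPathFrom _ not_exists_body_seq hp, fun w hw hwt => ?_⟩
  rcases eq_or_exists_fill_st_of_mem_loopVerts hv hn hw with rfl | ⟨F, hF, -⟩
  · rfl
  · exact (C.not_sTerm_fill_st F g (hF ▸ hwt.2)).elim

theorem level_lt_of_mem_loopVerts (hn : 0 < n) (h : ∃ w, Entry MStep n v w) {t t' : CSExp A}
    (ht : t ∈ loopVerts MStep v n) (htv : t ≠ v) {m : ℕ} (htt' : Entry MStep m t t') :
    m < n := by
  obtain ⟨C, g, hv, rfl, -⟩ := exists_fill_of_entry hn h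
  obtain rfl | ⟨F, hF, hFg⟩ := eq_or_exists_fill_st_of_mem_loopVerts hv hn ht
  · exact (htv rfl).elim
  obtain ⟨_, htt'⟩ := htt'
  rw [MStep, hF] at htt'
  rcases C.mStep_fill_st_cases htt' with ⟨F', hFF', -⟩ | ⟨hl, -, -⟩
  · have := hFF'.level_le_heightS
    omega
  · simp only [Prod.mk.injEq] at hl
    omega

theorem isWitness : IsWitness (MStep (A := A)) STerm :=
  ⟨not_exists_body_seq, fun _ _ => isLoopChart_subchartAt,
    fun _ _ hn h _ ht htv _ _ _ => level_lt_of_mem_loopVerts hn h ht htv⟩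

end CSExp

/-- The entry/body-labeled 1-LTS `L̂1(StExp^(*)(A))` is an
entry/body-labeling of the stacked star expressions 1-LTS `L1(StExp^(*)(A))`,
and it is a LLEE-witness of it, i.e., satisfies (W1)–(W3). -/
theorem labeled_oneLTS_is_LLEE_witness (A : Type u) :
    (∀ (E : CSExp A) (l : Option A) (E' : CSExp A),
      SExp.SStep E.1 l E'.1 ↔ ∃ n : ℕ, SExp.MStep E.1 (l, n) E'.1) ∧
    LLEE.IsWitness
      (fun (x : CSExp A) (l : Option A × ℕ) (y : CSExp A) => SExp.MStep x.1 l y.1)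
      (fun (x : CSExp A) => SExp.STerm x.1) :=
  ⟨fun _ _ _ => SExp.sStep_iff_exists_mStep, CSExp.isWitness⟩
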